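/- arXiv:1103.3858 — 9 statements merged into one kernel-verified Lean document; each statement's English description precedes it below -/
import Mathlib

section
/- If H is a hereditary family of finite sets (closed under taking subsets), then H can be partitioned into pairwise disjoint pairs {A, B} with A ∩ B = ∅, together with the singleton {∅} if |H| is odd. -/
/-!
Induct on the ground set: for a point `n`, `H` is the disjoint union of `H₀ = {A ∈ H | n ∉ A}`
and `{A ∪ {n} | A ∈ H₁}`, where `H₁ ⊆ H₀` are again hereditary, hence paired by induction, say by
`φ` and `γ`.

The two pairings are merged one step at a time: for `t ∈ H₁` pair `t` with `γ t ∪ {n}` and `φ t`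
with `t ∪ {n}`, then delete `t, φ t` from `H₀` and `t, γ t` from `H₁`. What remains has the same
shape, except that `φ t` may have left `H₀` while staying in `H₁`. So the merging is done for
families `S`, `T` with `T ⊆ S ∪ {e}`, and when `e ∈ T \ S` the next step starts from `t := γ e`.
The parity cases only decide where `∅` and `{n}` go.
-/

open Finset

namespace Berge

variable {α : Type*}

def IsPairing (f : Finset α → Finset α) (X : Finset (Finset α)) : Prop :=
  ∀ A ∈ X, f A ∈ X ∧ f (f A) = A ∧ f A ≠ A ∧ Disjoint A (f A)

theorem isPairing_empty (f : Finset α → Finset α) : IsPairing f ∅ := by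
  simp [IsPairing]

theorem empty_mem_of_isLowerSet {H : Finset (Finset α)} (hH : IsLowerSet (H : Set (Finset α)))
    (hne : H.Nonempty) : ∅ ∈ H :=
  let ⟨A, hA⟩ := hne
  hH (empty_subset A) hA

variable [DecidableEq α] {f φ γ : Finset α → Finset α} {X S T : Finset (Finset α)}

theorem IsPairing.sdiff_pair (hf : IsPairing f X) {a : Finset α} (ha : a ∈ X) :
    IsPairing f (X \ {a, f a}) := by
  obtain ⟨-, hffa, -, -⟩ := hf a ha
  intro A hA
  simp only [mem_sdiff, mem_insert, mem_singleton, not_or] at hA ⊢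
  obtain ⟨hAX, hAa, hAfa⟩ := hA
  obtain ⟨hfA, hffA, hne, hdisj⟩ := hf A hAX
  refine ⟨⟨hfA, fun h => hAfa ?_, fun h => hAa ?_⟩, hffA, hne, hdisj⟩
  · rw [← hffA, h]
  · rw [← hffA, h, hffa]

theorem IsPairing.of_sdiff_pair {a b : Finset α} (hf : IsPairing f (X \ {a, b})) (ha : a ∈ X)
    (hb : b ∈ X) (hab : a ≠ b) (hd : Disjoint a b) :
    IsPairing (fun A => if A = a then b else if A = b then a else f A) X := by
  intro A hA
  by_cases hAa : A = a
  · rw [hAa]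
    simp [hab.symm, hb, hd]
  by_cases hAb : A = b
  · rw [hAb]
    simp [hab, hab.symm, ha, hd.symm]
  obtain ⟨hfA, hffA, hne, hdisj⟩ := hf A (by simp [hA, hAa, hAb])
  simp only [mem_sdiff, mem_insert, mem_singleton, not_or] at hfA
  simp [hAa, hAb, hfA, hffA, hne, hdisj]

theorem IsPairing.exists_sdiff_pair_subset (hγ : IsPairing γ T) (hT : T.Nonempty) {e : Finset α}
    (hTS : T ⊆ insert e S) : ∃ t ∈ T, t ∈ S ∧ T \ {t, γ t} ⊆ S := by
  by_cases he : e ∈ T ∧ e ∉ S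
  · obtain ⟨hγe, hγγe, hne, -⟩ := hγ e he.1
    refine ⟨γ e, hγe, by simpa [hne] using hTS hγe, fun A hA => ?_⟩
    simp only [mem_sdiff, mem_insert, mem_singleton, not_or, hγγe] at hA
    simpa [hA.2.2] using hTS hA.1
  · obtain ⟨t, ht⟩ := hT
    have hTS' : T ⊆ S := fun A hA => by
      rcases mem_insert.1 (hTS hA) with rfl | h
      · tauto
      · exact h
    exact ⟨t, ht, hTS' ht, sdiff_subset.trans hTS'⟩

section InsertPoint

variable {n : α}

theorem injOn_insert (hT : ∀ A ∈ T, n ∉ A) : Set.InjOn (insert n) (T : Set (Finset α)) :=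
  insert_erase_invOn.2.injOn.mono hT

theorem disjoint_image_insert (hS : ∀ A ∈ S, n ∉ A) : Disjoint S (T.image (insert n)) := by
  refine disjoint_left.2 fun A hA hA' => ?_
  obtain ⟨B, -, rfl⟩ := mem_image.1 hA'
  exact hS _ hA (mem_insert_self n B)

theorem card_union_image_insert (hS : ∀ A ∈ S, n ∉ A) (hT : ∀ A ∈ T, n ∉ A) :
    (S ∪ T.image (insert n)).card = S.card + T.card := by
  rw [card_union_of_disjoint (disjoint_image_insert hS), card_image_of_injOn (injOn_insert hT)]

theorem union_image_insert_sdiff_union_image_insert {V W : Finset (Finset α)}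
    (hS : ∀ A ∈ S, n ∉ A) (hT : ∀ A ∈ T, n ∉ A) (hVS : V ⊆ S) (hWT : W ⊆ T) :
    (S ∪ T.image (insert n)) \ (V ∪ W.image (insert n)) = S \ V ∪ (T \ W).image (insert n) := by
  rw [image_sdiff_of_injOn (injOn_insert hT) hWT]
  ext B
  have := @hVS B
  have := image_subset_image (f := insert n) hWT (x := B)
  have : B ∈ S → B ∉ T.image (insert n) := fun h => disjoint_left.1 (disjoint_image_insert hS) h
  simp only [mem_union, mem_sdiff]
  tauto

theorem exists_isPairing_union_image_insert_of_sdiff (hφ : IsPairing φ S) (hγ : IsPairing γ T)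
    (hS : ∀ A ∈ S, n ∉ A) (hT : ∀ A ∈ T, n ∉ A) {t : Finset α} (htS : t ∈ S) (htT : t ∈ T)
    (hF : IsPairing f (S \ {t, φ t} ∪ (T \ {t, γ t}).image (insert n))) :
    ∃ F, IsPairing F (S ∪ T.image (insert n)) := by
  obtain ⟨hφt, -, hφne, hφd⟩ := hφ t htS
  obtain ⟨hγt, -, hγne, hγd⟩ := hγ t htT
  have hnt := hT t htT
  have hnφt := hS _ hφt
  have hne_insert : ∀ {A B : Finset α}, n ∉ A → A ≠ insert n B :=
    fun hA h => hA (h ▸ mem_insert_self n _)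
  have hinj : insert n t ≠ insert n (γ t) := fun h => hγne (injOn_insert hT hγt htT h.symm)
  rw [← union_image_insert_sdiff_union_image_insert hS hT
    (insert_subset htS (singleton_subset_iff.2 hφt))
    (insert_subset htT (singleton_subset_iff.2 hγt))] at hF
  have hpairs : {t, φ t} ∪ ({t, γ t} : Finset (Finset α)).image (insert n) =
      {t, insert n (γ t)} ∪ {φ t, insert n t} := by
    ext
    simp only [mem_union, mem_insert, mem_singleton, image_insert, image_singleton]
    tauto
  rw [hpairs] at hF
  replace hF :
      IsPairing f (((S ∪ T.image (insert n)) \ {t, insert n (γ t)}) \ {φ t, insert n t}) := by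
    rwa [sdiff_sdiff_left]
  refine ⟨_, (hF.of_sdiff_pair ?_ ?_ (hne_insert hnφt)
    (disjoint_insert_right.2 ⟨hnφt, hφd.symm⟩)).of_sdiff_pair (mem_union_left _ htS)
    (mem_union_right _ (mem_image_of_mem _ hγt)) (hne_insert hnt)
    (disjoint_insert_right.2 ⟨hnt, hγd⟩)⟩
  · simp [hφt, hφne, hne_insert hnφt]
  · simp [mem_image_of_mem _ htT, (hne_insert hnt).symm, hinj]

theorem exists_isPairing_union_image_insert (hφ : IsPairing φ S) (hγ : IsPairing γ T)
    (hS : ∀ A ∈ S, n ∉ A) (hT : ∀ A ∈ T, n ∉ A) {e : Finset α} (hTS : T ⊆ insert e S) :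
    ∃ F, IsPairing F (S ∪ T.image (insert n)) := by
  induction T using Finset.strongInduction generalizing S e with
  | H T ih =>
  rcases T.eq_empty_or_nonempty with rfl | hTne
  · exact ⟨φ, by simpa using hφ⟩
  obtain ⟨t, htT, htS, hsub⟩ := hγ.exists_sdiff_pair_subset hTne hTS
  have htγt : {t, γ t} ⊆ T := insert_subset htT (singleton_subset_iff.2 (hγ t htT).1)
  obtain ⟨F, hF⟩ := ih (T \ {t, γ t}) (sdiff_ssubset htγt (insert_nonempty _ _))
    (hφ.sdiff_pair htS) (hγ.sdiff_pair htT) (fun A hA => hS A (sdiff_subset hA))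
    (fun A hA => hT A (sdiff_subset hA)) (e := φ t) (fun A hA => by
      have := hsub hA
      simp only [mem_sdiff, mem_insert, mem_singleton, not_or] at hA ⊢
      tauto)
  exact exists_isPairing_union_image_insert_of_sdiff hφ hγ hS hT htS htT hF

variable {H₀ H₁ : Finset (Finset α)}

theorem exists_isPairing_union_image_insert_sdiff_empty (h₀ : ∀ A ∈ H₀, n ∉ A)
    (h₁ : ∀ A ∈ H₁, n ∉ A) (h₁₀ : H₁ ⊆ H₀) (hemp₁ : ∅ ∈ H₁) (hφ : IsPairing φ H₀)
    (hγ : IsPairing γ (H₁ \ {∅})) : ∃ F, IsPairing F ((H₀ ∪ H₁.image (insert n)) \ {∅}) := by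
  obtain ⟨hc, -, hc_ne, -⟩ := hφ ∅ (h₁₀ hemp₁)
  have hnc : n ∉ φ ∅ := h₀ _ hc
  obtain ⟨F, hF⟩ := exists_isPairing_union_image_insert (hφ.sdiff_pair (h₁₀ hemp₁)) hγ
    (fun A hA => h₀ A (sdiff_subset hA)) (fun A hA => h₁ A (sdiff_subset hA)) (e := φ ∅)
    (fun A hA => by
      have := @h₁₀ A
      simp only [mem_sdiff, mem_insert, mem_singleton] at hA ⊢
      tauto)
  rw [← union_image_insert_sdiff_union_image_insert h₀ h₁
    (insert_subset (h₁₀ hemp₁) (singleton_subset_iff.2 hc)) (singleton_subset_iff.2 hemp₁)] at hF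
  have hX : ((H₀ ∪ H₁.image (insert n)) \ {∅}) \ {φ ∅, {n}} =
      (H₀ ∪ H₁.image (insert n)) \ ({∅, φ ∅} ∪ ({∅} : Finset (Finset α)).image (insert n)) := by
    ext
    simp only [mem_sdiff, mem_union, mem_insert, mem_singleton, image_singleton, insert_empty_eq]
    tauto
  refine ⟨_, (hX ▸ hF).of_sdiff_pair ?_ ?_ (fun h => hnc (h ▸ mem_singleton_self n))
    (disjoint_singleton_right.2 hnc)⟩
  · simp [hc, hc_ne]
  · exact mem_sdiff.2 ⟨mem_union_right _ (mem_image.2 ⟨∅, hemp₁, rfl⟩), by simp⟩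

theorem exists_isPairing_union_image_insert_of_sdiff_empty (h₀ : ∀ A ∈ H₀, n ∉ A)
    (h₁ : ∀ A ∈ H₁, n ∉ A) (h₁₀ : H₁ ⊆ H₀) (hemp₁ : ∅ ∈ H₁) (hφ : IsPairing φ (H₀ \ {∅}))
    (hγ : IsPairing γ (H₁ \ {∅})) : ∃ F, IsPairing F (H₀ ∪ H₁.image (insert n)) := by
  obtain ⟨F, hF⟩ := exists_isPairing_union_image_insert hφ hγ
    (fun A hA => h₀ A (sdiff_subset hA)) (fun A hA => h₁ A (sdiff_subset hA)) (e := ∅)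
    ((sdiff_subset_sdiff h₁₀ le_rfl).trans (subset_insert _ _))
  rw [← union_image_insert_sdiff_union_image_insert h₀ h₁
    (singleton_subset_iff.2 (h₁₀ hemp₁)) (singleton_subset_iff.2 hemp₁)] at hF
  have hX : {∅} ∪ ({∅} : Finset (Finset α)).image (insert n) = {∅, {n}} := by
    ext
    simp
  rw [hX] at hF
  exact ⟨_, hF.of_sdiff_pair (mem_union_left _ (h₁₀ hemp₁))
    (mem_union_right _ (mem_image.2 ⟨∅, hemp₁, rfl⟩)) (by simp) (disjoint_empty_left _)⟩

end InsertPoint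

def eraseEmptyIfOdd (H : Finset (Finset α)) : Finset (Finset α) :=
  if H.card % 2 = 1 then H.erase ∅ else H

theorem exists_isPairing_eraseEmptyIfOdd_union_image_insert {n : α} {H₀ H₁ : Finset (Finset α)}
    (h₀ : ∀ A ∈ H₀, n ∉ A) (h₁ : ∀ A ∈ H₁, n ∉ A) (h₁₀ : H₁ ⊆ H₀)
    (hempty : H₁.Nonempty → ∅ ∈ H₁) (hφ : IsPairing φ (eraseEmptyIfOdd H₀))
    (hγ : IsPairing γ (eraseEmptyIfOdd H₁)) :
    ∃ F, IsPairing F (eraseEmptyIfOdd (H₀ ∪ H₁.image (insert n))) := by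
  simp only [eraseEmptyIfOdd, card_union_image_insert h₀ h₁, ← sdiff_singleton_eq_erase]
    at hφ hγ ⊢
  rcases Nat.mod_two_eq_zero_or_one H₀.card with e₀ | o₀ <;>
    rcases Nat.mod_two_eq_zero_or_one H₁.card with e₁ | o₁
  · rw [if_neg (by omega)] at hφ hγ ⊢
    exact exists_isPairing_union_image_insert hφ hγ h₀ h₁ (h₁₀.trans (subset_insert ∅ _))
  · rw [if_neg (by omega)] at hφ
    rw [if_pos o₁] at hγ
    rw [if_pos (by omega)]
    exact exists_isPairing_union_image_insert_sdiff_empty h₀ h₁ h₁₀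
      (hempty (card_pos.1 (by omega))) hφ hγ
  · rw [if_pos o₀] at hφ
    rw [if_neg (by omega)] at hγ
    rw [if_pos (by omega)]
    rcases H₁.eq_empty_or_nonempty with rfl | hne
    · exact ⟨φ, by simpa using hφ⟩
    obtain ⟨F, hF⟩ := exists_isPairing_union_image_insert hφ hγ
      (fun A hA => h₀ A (sdiff_subset hA)) h₁ (e := ∅) (subset_insert_iff.2
        (by simpa only [← sdiff_singleton_eq_erase] using sdiff_subset_sdiff h₁₀ le_rfl))
    refine ⟨F, ?_⟩
    rwa [union_sdiff_distrib, sdiff_singleton_eq_erase _ (image _ _), erase_eq_of_notMem (by simp)]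
  · rw [if_pos o₀] at hφ
    rw [if_pos o₁] at hγ
    rw [if_neg (by omega)]
    exact exists_isPairing_union_image_insert_of_sdiff_empty h₀ h₁ h₁₀
      (hempty (card_pos.1 (by omega))) hφ hγ

theorem nonMemberSubfamily_union_image_insert_memberSubfamily (n : α) (H : Finset (Finset α)) :
    H.nonMemberSubfamily n ∪ (H.memberSubfamily n).image (insert n) = H := by
  rw [image_insert_memberSubfamily, nonMemberSubfamily, union_comm, filter_union_filter_not_eq]

theorem exists_isPairing_eraseEmptyIfOdd {H : Finset (Finset α)}
    (hH : IsLowerSet (H : Set (Finset α))) : ∃ f, IsPairing f (eraseEmptyIfOdd H) := by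
  induction H using memberFamily_induction_on with
  | empty => exact ⟨id, by simp [eraseEmptyIfOdd, isPairing_empty]⟩
  | singleton_empty => exact ⟨id, by simp [eraseEmptyIfOdd, isPairing_empty]⟩
  | @subfamily n H ih₀ ih₁ =>
    obtain ⟨φ, hφ⟩ := ih₀ hH.nonMemberSubfamily
    obtain ⟨γ, hγ⟩ := ih₁ hH.memberSubfamily
    rw [← nonMemberSubfamily_union_image_insert_memberSubfamily n H]
    exact exists_isPairing_eraseEmptyIfOdd_union_image_insert (by simp +contextual)
      (by simp +contextual) hH.memberSubfamily_subset_nonMemberSubfamily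
      (empty_mem_of_isLowerSet hH.memberSubfamily) hφ hγ

end Berge

/-- Berge's theorem: a hereditary family can be partitioned into pairwise
disjoint pairs `{A, f A}` with `A ∩ f A = ∅`, together with `∅` if `|H|` is odd. -/
theorem berge_partition {α : Type*} [DecidableEq α] (H : Finset (Finset α))
    (hH : ∀ A ∈ H, ∀ B ⊆ A, B ∈ H) :
    ∃ f : Finset α → Finset α,
      (H.card % 2 = 1 → ∅ ∈ H) ∧
      ∀ A ∈ (if H.card % 2 = 1 then H.erase ∅ else H),
        f A ∈ (if H.card % 2 = 1 then H.erase ∅ else H) ∧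
        f (f A) = A ∧ f A ≠ A ∧ A ∩ f A = ∅ := by
  have hH' : IsLowerSet (H : Set (Finset α)) := fun A B hBA hA => hH A hA B hBA
  obtain ⟨f, hf⟩ := Berge.exists_isPairing_eraseEmptyIfOdd hH'
  refine ⟨f, fun hodd => Berge.empty_mem_of_isLowerSet hH' (card_pos.1 (by omega)),
    fun A hA => ?_⟩
  obtain ⟨hfA, hffA, hne, hdisj⟩ := hf A hA
  exact ⟨hfA, hffA, hne, disjoint_iff_inter_eq_empty.1 hdisj⟩
end

section
/- If A is an intersecting sub-family of a hereditary family H, then |A| ≤ |H|/2. -/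
/-!
Let `s` be the union of `H`, let `𝒰` be the family of subsets of `s` containing a member of `𝒜`,
and let `𝒟` be the family of subsets of `s` containing none. Then `𝒰` is intersecting, so
complementation in `s` injects it into `𝒟`, and `𝒟` has at least half of the `2 ^ |s|` subsets
of `s`. Both `H` and `𝒟` are lower sets, so by the Harris–Kleitman inequality
`|H| |𝒟| ≤ 2 ^ |s| |H ∩ 𝒟| ≤ 2 |𝒟| |H ∩ 𝒟|`, i.e. `|H| ≤ 2 |H ∩ 𝒟|`. Finally `H ∩ 𝒟` is disjoint
from `𝒜`, so `|H ∩ 𝒟| ≤ |H| - |𝒜|`.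
-/

open Finset

section

variable {α : Type*} [DecidableEq α] {s : Finset α} {𝒜 ℋ 𝒟 : Finset (Finset α)}

theorem Set.Intersecting.two_mul_card_le_two_pow_card (h𝒜 : (𝒜 : Set (Finset α)).Intersecting)
    (h𝒜s : ∀ t ∈ 𝒜, t ⊆ s) : 2 * #𝒜 ≤ 2 ^ #s := by
  have hinj : Set.InjOn (s \ ·) 𝒜 := fun t ht u hu htu => by
    simpa [Finset.sdiff_sdiff_eq_self (h𝒜s t ht), Finset.sdiff_sdiff_eq_self (h𝒜s u hu)] using
      congrArg (s \ ·) htu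
  have hdisj : Disjoint 𝒜 (𝒜.image (s \ ·)) := by
    refine Finset.disjoint_left.2 fun t ht htc => ?_
    obtain ⟨u, hu, rfl⟩ := Finset.mem_image.1 htc
    exact h𝒜 hu ht disjoint_sdiff_self_right
  have hsub : 𝒜 ∪ 𝒜.image (s \ ·) ⊆ s.powerset := by
    refine Finset.union_subset (fun t ht => Finset.mem_powerset.2 (h𝒜s t ht)) fun t ht => ?_
    obtain ⟨u, -, rfl⟩ := Finset.mem_image.1 ht
    exact Finset.mem_powerset.2 Finset.sdiff_subset
  calc 2 * #𝒜 = #(𝒜 ∪ 𝒜.image (s \ ·)) := by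
        rw [Finset.card_union_of_disjoint hdisj, Finset.card_image_of_injOn hinj, two_mul]
    _ ≤ 2 ^ #s := (Finset.card_le_card hsub).trans_eq (Finset.card_powerset s)

theorem IsLowerSet.card_le_two_mul_card_inter_finset (hℋ : IsLowerSet (ℋ : Set (Finset α)))
    (h𝒟 : IsLowerSet (𝒟 : Set (Finset α)))
    (hℋs : ∀ t ∈ ℋ, t ⊆ s) (h𝒟s : ∀ t ∈ 𝒟, t ⊆ s) (h𝒟_large : 2 ^ #s ≤ 2 * #𝒟) :
    #ℋ ≤ 2 * #(ℋ ∩ 𝒟) := by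
  have h𝒟_pos : 0 < #𝒟 := by have := Nat.one_le_two_pow (n := #s); omega
  refine Nat.le_of_mul_le_mul_right ?_ h𝒟_pos
  calc #ℋ * #𝒟 ≤ 2 ^ #s * #(ℋ ∩ 𝒟) := hℋ.le_card_inter_finset' h𝒟 hℋs h𝒟s
    _ ≤ 2 * #𝒟 * #(ℋ ∩ 𝒟) := Nat.mul_le_mul_right _ h𝒟_large
    _ = 2 * #(ℋ ∩ 𝒟) * #𝒟 := by ring

namespace Finset

def upperClosureIn (s : Finset α) (𝒜 : Finset (Finset α)) : Finset (Finset α) :=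
  s.powerset.filter fun t => ∃ A ∈ 𝒜, A ⊆ t

theorem mem_upperClosureIn {t : Finset α} :
    t ∈ upperClosureIn s 𝒜 ↔ t ⊆ s ∧ ∃ A ∈ 𝒜, A ⊆ t := by
  rw [upperClosureIn, mem_filter, mem_powerset]

theorem upperClosureIn_subset_powerset : upperClosureIn s 𝒜 ⊆ s.powerset :=
  filter_subset _ _

theorem subset_upperClosureIn (h𝒜s : ∀ t ∈ 𝒜, t ⊆ s) : 𝒜 ⊆ upperClosureIn s 𝒜 :=
  fun t ht => mem_upperClosureIn.2 ⟨h𝒜s t ht, t, ht, subset_rfl⟩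

theorem isLowerSet_powerset_sdiff_upperClosureIn :
    IsLowerSet ((s.powerset \ upperClosureIn s 𝒜 : Finset (Finset α)) : Set (Finset α)) := by
  intro t u hut ht
  simp only [coe_sdiff, Set.mem_sdiff, mem_coe, mem_powerset, mem_upperClosureIn, not_and,
    not_exists] at ht ⊢
  exact ⟨hut.trans ht.1, fun _ A hA hAu => ht.2 ht.1 A hA (hAu.trans hut)⟩

end Finset

theorem Set.Intersecting.upperClosureIn (h𝒜 : (𝒜 : Set (Finset α)).Intersecting)
    (s : Finset α) :
    ((Finset.upperClosureIn s 𝒜 : Finset (Finset α)) : Set (Finset α)).Intersecting := by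
  intro t ht u hu htu
  obtain ⟨-, A, hA, hAt⟩ := mem_upperClosureIn.1 ht
  obtain ⟨-, B, hB, hBu⟩ := mem_upperClosureIn.1 hu
  exact h𝒜 hA hB (htu.mono hAt hBu)

theorem Set.Intersecting.two_pow_card_le_two_mul_card_powerset_sdiff_upperClosureIn
    (h𝒜 : (𝒜 : Set (Finset α)).Intersecting) :
    2 ^ #s ≤ 2 * #(s.powerset \ Finset.upperClosureIn s 𝒜) := by
  have hU := (h𝒜.upperClosureIn s).two_mul_card_le_two_pow_card fun t ht =>
    (mem_upperClosureIn.1 ht).1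
  rw [Finset.card_sdiff_of_subset upperClosureIn_subset_powerset, Finset.card_powerset]
  omega

end

theorem intersecting_subfamily_of_hereditary {α : Type*} [DecidableEq α]
    (H 𝒜 : Finset (Finset α))
    (hH : ∀ A ∈ H, ∀ B ⊆ A, B ∈ H)
    (h𝒜 : 𝒜 ⊆ H)
    (hint : ∀ A ∈ 𝒜, ∀ B ∈ 𝒜, (A ∩ B).Nonempty) :
    2 * 𝒜.card ≤ H.card := by
  set s := H.sup id
  set 𝒟 := s.powerset \ upperClosureIn s 𝒜
  have hHs : ∀ t ∈ H, t ⊆ s := fun t ht => le_sup (f := id) ht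
  have h𝒜_int : (𝒜 : Set (Finset α)).Intersecting := fun A hA B hB =>
    not_disjoint_iff_nonempty_inter.2 (hint A hA B hB)
  have hH_half : #H ≤ 2 * #(H ∩ 𝒟) :=
    IsLowerSet.card_le_two_mul_card_inter_finset (fun t u hut ht => hH t ht u hut)
      isLowerSet_powerset_sdiff_upperClosureIn hHs
      (fun t ht => mem_powerset.1 (mem_sdiff.1 ht).1)
      h𝒜_int.two_pow_card_le_two_mul_card_powerset_sdiff_upperClosureIn
  have hH𝒟 : H ∩ 𝒟 ⊆ H \ 𝒜 := fun t ht => by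
    obtain ⟨htH, ht𝒟⟩ := mem_inter.1 ht
    exact mem_sdiff.2 ⟨htH, fun ht𝒜 =>
      (mem_sdiff.1 ht𝒟).2 (subset_upperClosureIn (fun u hu => hHs u (h𝒜 hu)) ht𝒜)⟩
  have h𝒟_card : #(H ∩ 𝒟) ≤ #H - #𝒜 := (card_le_card hH𝒟).trans_eq (card_sdiff_of_subset h𝒜)
  have h𝒜_le : #𝒜 ≤ #H := card_le_card h𝒜
  omega
end

section
/- If all bases of a nonempty hereditary family H have a common element x, then the star H⟨x⟩ = {A ∈ H : x ∈ A} satisfies |H⟨x⟩| = |H|/2. -/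
/-!
Every `A ∈ H` lies in some base, which contains `x`, so heredity puts `insert x A` in `H`;
conversely `A.erase x ∈ H`. Hence `A ↦ insert x A` and `B ↦ B.erase x` are inverse bijections
between the members of `H` avoiding `x` and those containing `x`, and each half has size `|H|/2`.
-/

open Finset

namespace Finset

variable {α : Type*} [DecidableEq α]

theorem two_mul_card_filter_mem_eq_card_of_insert_erase_mem (H : Finset (Finset α)) (x : α)
    (hinsert : ∀ A ∈ H, insert x A ∈ H) (herase : ∀ A ∈ H, A.erase x ∈ H) :
    2 * (H.filter (fun A => x ∈ A)).card = H.card := by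
  have hswap : (H.filter (fun A => x ∉ A)).card = (H.filter (fun A => x ∈ A)).card := by
    refine card_bij' (fun A _ => insert x A) (fun B _ => B.erase x) ?_ ?_ ?_ ?_
    · intro A hA
      exact mem_filter.2 ⟨hinsert A (mem_filter.1 hA).1, mem_insert_self x A⟩
    · intro B hB
      exact mem_filter.2 ⟨herase B (mem_filter.1 hB).1, notMem_erase x B⟩
    · intro A hA
      exact erase_insert (mem_filter.1 hA).2
    · intro B hB
      exact insert_erase (mem_filter.1 hB).2
  have hsplit := card_filter_add_card_filter_not (s := H) (p := fun A => x ∈ A)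
  omega

theorem insert_mem_of_forall_maximal_mem {H : Finset (Finset α)} {x : α}
    (hH : ∀ A ∈ H, ∀ B ⊆ A, B ∈ H)
    (hx : ∀ B ∈ H, (∀ C ∈ H, B ⊆ C → B = C) → x ∈ B) {A : Finset α} (hA : A ∈ H) :
    insert x A ∈ H := by
  obtain ⟨B, hAB, hBH, hBmax⟩ := H.exists_le_maximal hA
  have hxB : x ∈ B := hx B hBH fun C hC hBC => hBC.antisymm (hBmax hC hBC)
  exact hH B hBH _ (insert_subset hxB hAB)

end Finset

theorem star_half_of_bases_common_general {α : Type*} [DecidableEq α]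
    (H : Finset (Finset α)) (x : α)
    (hH : ∀ A ∈ H, ∀ B ⊆ A, B ∈ H)
    (hx : ∀ B ∈ H, (∀ C ∈ H, B ⊆ C → B = C) → x ∈ B) :
    2 * (H.filter (fun A => x ∈ A)).card = H.card :=
  two_mul_card_filter_mem_eq_card_of_insert_erase_mem H x
    (fun _ hA => insert_mem_of_forall_maximal_mem hH hx hA)
    (fun A hA => hH A hA _ (erase_subset x A))

theorem star_half_of_bases_common {α : Type*} [DecidableEq α]
    (H : Finset (Finset α)) (x : α)
    (hne : H.Nonempty)
    (hH : ∀ A ∈ H, ∀ B ⊆ A, B ∈ H)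
    (hx : ∀ B ∈ H, (∀ C ∈ H, B ⊆ C → B = C) → x ∈ B) :
    2 * (H.filter (fun A => x ∈ A)).card = H.card :=
  star_half_of_bases_common_general H x hH hx
end

section
/- If all bases of a hereditary family H have a common element, then H has the star property: some star H⟨x⟩ is a largest intersecting sub-family of H. -/
/-!
Let `x` lie in every base of `H`. Then `H` is closed under `A ↦ insert x A`, so the star `H⟨x⟩`
is in bijection with the lower family of members of `H` avoiding `x`. An intersecting `𝒜 ⊆ H`
splits into `𝒜₀` (members avoiding `x`) and `𝒜₁` (members containing `x`, with `x` removed);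
both lie in that lower family, and `𝒜₁ ∪ 𝒜₀`, `𝒜₁ ∩ 𝒜₀` are cross-intersecting since no member
of `𝒜₀` contains `x`. So it suffices that cross-intersecting subfamilies `ℬ, 𝒞` of a lower
family `S` satisfy `|ℬ| + |𝒞| ≤ |S|`. This follows by induction on the ground set: split
everything along an element `a` and apply the induction hypothesis to `(ℬ₀ ∪ ℬ₁, 𝒞₀)` in the
non-member part of `S`, which contains `ℬ₁` because `S` is lower, and to `(ℬ₀ ∩ ℬ₁, 𝒞₁)` in its
member part.
-/

open Finset

namespace Finset

variable {α : Type*} [DecidableEq α] {𝒜 ℬ 𝒞 ℬ' 𝒞' : Finset (Finset α)} {a : α}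

lemma memberSubfamily_mono (h : ℬ ⊆ 𝒜) : ℬ.memberSubfamily a ⊆ 𝒜.memberSubfamily a :=
  fun s ↦ by simpa only [mem_memberSubfamily] using And.imp_left (@h _)

lemma nonMemberSubfamily_mono (h : ℬ ⊆ 𝒜) : ℬ.nonMemberSubfamily a ⊆ 𝒜.nonMemberSubfamily a :=
  filter_subset_filter _ h

lemma nonMemberSubfamily_subset (a : α) (𝒜 : Finset (Finset α)) : 𝒜.nonMemberSubfamily a ⊆ 𝒜 :=
  filter_subset _ _

lemma card_memberSubfamily (a : α) (𝒜 : Finset (Finset α)) :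
    #(𝒜.memberSubfamily a) = #{s ∈ 𝒜 | a ∈ s} :=
  card_image_of_injOn <| (erase_injOn' a).mono fun _ hs ↦ (mem_filter.mp hs).2

lemma memberSubfamily_eq_nonMemberSubfamily (h𝒜 : IsLowerSet (𝒜 : Set (Finset α)))
    (hins : ∀ s ∈ 𝒜, insert a s ∈ 𝒜) : 𝒜.memberSubfamily a = 𝒜.nonMemberSubfamily a :=
  h𝒜.memberSubfamily_subset_nonMemberSubfamily.antisymm fun s hs ↦ by
    rw [mem_nonMemberSubfamily] at hs
    exact mem_memberSubfamily.mpr ⟨hins s hs.1, hs.2⟩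

lemma insert_mem_of_forall_maximal_mem_s3 (h𝒜 : IsLowerSet (𝒜 : Set (Finset α)))
    (ha : ∀ t, Maximal (· ∈ 𝒜) t → a ∈ t) {s : Finset α} (hs : s ∈ 𝒜) : insert a s ∈ 𝒜 := by
  obtain ⟨t, hst, ht⟩ := 𝒜.exists_le_maximal hs
  exact h𝒜 (insert_subset (ha t ht) hst) ht.1

def CrossIntersecting (ℬ 𝒞 : Finset (Finset α)) : Prop :=
  ∀ b ∈ ℬ, ∀ c ∈ 𝒞, (b ∩ c).Nonempty

namespace CrossIntersecting

lemma symm (h : CrossIntersecting ℬ 𝒞) : CrossIntersecting 𝒞 ℬ :=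
  fun c hc b hb ↦ inter_comm b c ▸ h b hb c hc

lemma mono (h : CrossIntersecting ℬ 𝒞) (hℬ : ℬ' ⊆ ℬ) (h𝒞 : 𝒞' ⊆ 𝒞) :
    CrossIntersecting ℬ' 𝒞' :=
  fun b hb c hc ↦ h b (hℬ hb) c (h𝒞 hc)

lemma union_left (h : CrossIntersecting ℬ 𝒞) (h' : CrossIntersecting ℬ' 𝒞) :
    CrossIntersecting (ℬ ∪ ℬ') 𝒞 := by
  intro b hb c hc
  rcases mem_union.mp hb with hb | hb
  exacts [h b hb c hc, h' b hb c hc]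

lemma memberSubfamily_nonMemberSubfamily (h : CrossIntersecting ℬ 𝒞) :
    CrossIntersecting (ℬ.memberSubfamily a) (𝒞.nonMemberSubfamily a) := by
  intro b hb c hc
  rw [mem_memberSubfamily] at hb
  rw [mem_nonMemberSubfamily] at hc
  have := h _ hb.1 c hc.1
  rwa [← erase_insert hb.2, erase_inter_comm, erase_eq_of_notMem hc.2]

end CrossIntersecting

lemma _root_.IsLowerSet.card_add_card_le_of_crossIntersecting {S : Finset (Finset α)}
    (hS : IsLowerSet (S : Set (Finset α))) (hℬ : ℬ ⊆ S) (h𝒞 : 𝒞 ⊆ S)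
    (hcross : CrossIntersecting ℬ 𝒞) : #ℬ + #𝒞 ≤ #S := by
  induction S using memberFamily_induction_on generalizing ℬ 𝒞 with
  | empty => simp [subset_empty.mp hℬ, subset_empty.mp h𝒞]
  | singleton_empty =>
    rcases subset_singleton_iff.mp hℬ with rfl | rfl
    · simpa using card_le_card h𝒞
    rcases subset_singleton_iff.mp h𝒞 with rfl | rfl
    · simp
    · simpa using hcross ∅ (mem_singleton_self _) ∅ (mem_singleton_self _)
  | @subfamily a S ih₀ ih₁ =>
    have h₀ := ih₀ hS.nonMemberSubfamily
      (union_subset (nonMemberSubfamily_mono hℬ)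
        ((memberSubfamily_mono hℬ).trans hS.memberSubfamily_subset_nonMemberSubfamily))
      (nonMemberSubfamily_mono h𝒞)
      ((hcross.mono (nonMemberSubfamily_subset a ℬ) (nonMemberSubfamily_subset a 𝒞)).union_left
        hcross.memberSubfamily_nonMemberSubfamily)
    have h₁ := ih₁ hS.memberSubfamily (inter_subset_right.trans (memberSubfamily_mono hℬ))
      (memberSubfamily_mono h𝒞)
      (hcross.symm.memberSubfamily_nonMemberSubfamily.symm.mono inter_subset_left subset_rfl)
    rw [← card_memberSubfamily_add_card_nonMemberSubfamily a ℬ,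
      ← card_memberSubfamily_add_card_nonMemberSubfamily a 𝒞,
      ← card_memberSubfamily_add_card_nonMemberSubfamily a S]
    have := card_union_add_card_inter (ℬ.nonMemberSubfamily a) (ℬ.memberSubfamily a)
    omega

end Finset

theorem schonheim_star_property {α : Type*} [DecidableEq α]
    (H : Finset (Finset α))
    (hH : ∀ A ∈ H, ∀ B ⊆ A, B ∈ H)
    (hcommon : ∃ x : α, ∀ B ∈ H, (∀ C ∈ H, B ⊆ C → B = C) → x ∈ B) :
    ∃ x : α, ∀ 𝒜 ⊆ H, (∀ A ∈ 𝒜, ∀ B ∈ 𝒜, (A ∩ B).Nonempty) →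
      𝒜.card ≤ (H.filter (fun A => x ∈ A)).card := by
  obtain ⟨x, hx⟩ := hcommon
  have hlower : IsLowerSet (H : Set (Finset α)) := fun A B hBA hA ↦ hH A hA B hBA
  have hins : ∀ A ∈ H, insert x A ∈ H := fun A ↦ insert_mem_of_forall_maximal_mem_s3 hlower
    fun B hB ↦ hx B hB.1 fun C hC hBC ↦ le_antisymm hBC (hB.2 hC hBC)
  refine ⟨x, fun 𝒜 h𝒜 h𝒜int ↦ ?_⟩
  have hint : CrossIntersecting 𝒜 𝒜 := h𝒜int
  set 𝒜₀ := 𝒜.nonMemberSubfamily x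
  set 𝒜₁ := 𝒜.memberSubfamily x
  have hcross : CrossIntersecting (𝒜₁ ∪ 𝒜₀) (𝒜₁ ∩ 𝒜₀) :=
    (hint.memberSubfamily_nonMemberSubfamily.union_left
      (hint.mono (nonMemberSubfamily_subset x 𝒜) (nonMemberSubfamily_subset x 𝒜))).mono
      subset_rfl inter_subset_right
  calc #𝒜 = #(𝒜₁ ∪ 𝒜₀) + #(𝒜₁ ∩ 𝒜₀) := by
        rw [card_union_add_card_inter, card_memberSubfamily_add_card_nonMemberSubfamily]
    _ ≤ #(H.nonMemberSubfamily x) :=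
        hlower.nonMemberSubfamily.card_add_card_le_of_crossIntersecting
          (union_subset
            ((memberSubfamily_mono h𝒜).trans hlower.memberSubfamily_subset_nonMemberSubfamily)
            (nonMemberSubfamily_mono h𝒜))
          (inter_subset_right.trans (nonMemberSubfamily_mono h𝒜)) hcross
    _ = #{A ∈ H | x ∈ A} := by
        rw [← memberSubfamily_eq_nonMemberSubfamily hlower hins, card_memberSubfamily]
end

section
/- If a hereditary family H is compressed with respect to an element x of the union of H, then H⟨x⟩ is a largest intersecting sub-family of H. -/
/-!
Split an intersecting family `𝒜 ⊆ H` into the sets `𝒜₁` containing `x` and the sets `𝒜₀` avoiding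
it. For `A, B ∈ 𝒜₀` pick `y ∈ A ∩ B`: compressing `A` at `y` and passing to a subset puts
`insert x (A \ B)` into the star of `x`, and this set misses `B`, so it is not in `𝒜`. Since
`insert x` is injective on sets avoiding `x`, the Marica–Schönheim inequality `|𝒜₀| ≤ |𝒜₀ \\ 𝒜₀|`
gives `|𝒜₀| ≤ |star \ 𝒜|`, while `|𝒜₁| ≤ |star ∩ 𝒜|`.
-/

open Finset FinsetFamily

section

variable {α : Type*} [DecidableEq α] {H 𝒜 : Finset (Finset α)} {x : α}

theorem insert_sdiff_mem_of_compressed (hH : ∀ A ∈ H, ∀ B ⊆ A, B ∈ H)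
    (hcomp : ∀ F ∈ H, ∀ y ∈ F, x ∉ F → insert x (F.erase y) ∈ H)
    {A B : Finset α} (hA : A ∈ H) (hxA : x ∉ A) (hAB : (A ∩ B).Nonempty) :
    insert x (A \ B) ∈ H := by
  obtain ⟨y, hy⟩ := hAB
  obtain ⟨hyA, hyB⟩ := mem_inter.1 hy
  refine hH _ (hcomp A hA y hyA hxA) _ (insert_subset_insert x ?_)
  rw [← sdiff_singleton_eq_erase]
  exact sdiff_subset_sdiff subset_rfl (singleton_subset_iff.2 hyB)

theorem card_diffs_le_card_star_sdiff (hH : ∀ A ∈ H, ∀ B ⊆ A, B ∈ H)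
    (hcomp : ∀ F ∈ H, ∀ y ∈ F, x ∉ F → insert x (F.erase y) ∈ H) (h𝒜 : 𝒜 ⊆ H)
    (hint : ∀ A ∈ 𝒜, ∀ B ∈ 𝒜, (A ∩ B).Nonempty) :
    #(𝒜.filter (x ∉ ·) \\ 𝒜.filter (x ∉ ·)) ≤ #(H.filter (x ∈ ·) \ 𝒜) := by
  have hx_not_mem : ∀ G ∈ 𝒜.filter (x ∉ ·) \\ 𝒜.filter (x ∉ ·), x ∉ G := by
    simp only [forall_mem_diffs, mem_filter, mem_sdiff, not_and_or]
    exact fun A hA _ _ => .inl hA.2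
  refine card_le_card_of_injOn (insert x) ?_ ?_
  · simp only [Set.MapsTo, mem_coe, forall_mem_diffs, mem_filter]
    rintro A ⟨hA, hxA⟩ B ⟨hB, hxB⟩
    refine mem_sdiff.2 ⟨mem_filter.2 ⟨?_, mem_insert_self _ _⟩, fun hmem => ?_⟩
    · exact insert_sdiff_mem_of_compressed hH hcomp (h𝒜 hA) hxA (hint A hA B hB)
    · exact not_disjoint_iff_nonempty_inter.2 (hint _ hmem B hB)
        (disjoint_insert_left.2 ⟨hxB, sdiff_disjoint⟩)
  · intro G hG G' hG' h
    rw [← erase_insert (hx_not_mem G hG), h, erase_insert (hx_not_mem G' hG')]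

end

theorem snevily_star_property_general {α : Type*} [DecidableEq α]
    (H : Finset (Finset α)) (x : α)
    (hH : ∀ A ∈ H, ∀ B ⊆ A, B ∈ H)
    (hcomp : ∀ F ∈ H, ∀ y ∈ F, x ∉ F → insert x (F.erase y) ∈ H) :
    ∀ 𝒜 ⊆ H, (∀ A ∈ 𝒜, ∀ B ∈ 𝒜, (A ∩ B).Nonempty) →
      𝒜.card ≤ (H.filter (fun A => x ∈ A)).card := by
  intro 𝒜 h𝒜 hint
  have h𝒜₁ : 𝒜.filter (x ∈ ·) ⊆ H.filter (x ∈ ·) ∩ 𝒜 := fun A hA => by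
    simp only [mem_filter, mem_inter] at hA ⊢
    exact ⟨⟨h𝒜 hA.1, hA.2⟩, hA.1⟩
  calc #𝒜 = #(𝒜.filter (x ∈ ·)) + #(𝒜.filter (x ∉ ·)) :=
        (card_filter_add_card_filter_not _).symm
    _ ≤ #(H.filter (x ∈ ·) ∩ 𝒜) + #(𝒜.filter (x ∉ ·) \\ 𝒜.filter (x ∉ ·)) :=
        add_le_add (card_le_card h𝒜₁) (card_le_card_diffs _)
    _ ≤ #(H.filter (x ∈ ·) ∩ 𝒜) + #(H.filter (x ∈ ·) \ 𝒜) :=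
        Nat.add_le_add_left (card_diffs_le_card_star_sdiff hH hcomp h𝒜 hint) _
    _ = #(H.filter (fun A => x ∈ A)) := card_inter_add_card_sdiff _ _

theorem snevily_star_property {α : Type*} [DecidableEq α]
    (H : Finset (Finset α)) (x : α)
    (hH : ∀ A ∈ H, ∀ B ⊆ A, B ∈ H)
    (hcomp : ∀ F ∈ H, ∀ y ∈ F, x ∉ F → insert x (F.erase y) ∈ H)
    (hx : ∃ F ∈ H, x ∈ F) :
    ∀ 𝒜 ⊆ H, (∀ A ∈ 𝒜, ∀ B ∈ 𝒜, (A ∩ B).Nonempty) →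
      𝒜.card ≤ (H.filter (fun A => x ∈ A)).card :=
  snevily_star_property_general H x hH hcomp
end

section
/- Let A ⊆ 2^[n] and B = Δ_{i,j}(A) for distinct i, j ∈ [n]. If A ∈ A* (A intersects every member of A), then δ_{i,j}(A) ∈ B* (δ_{i,j}(A) intersects every member of B). -/
open Finset

variable {n : ℕ}

def delta {α : Type*} [DecidableEq α] (i j : α) (A : Finset α) : Finset α :=
  if j ∈ A ∧ i ∉ A then insert i (A.erase j) else A

def compFam {α : Type*} [DecidableEq α] (i j : α) (𝒜 : Finset (Finset α)) :
    Finset (Finset α) :=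
  𝒜.filter (fun A => delta i j A ∈ 𝒜) ∪
    (𝒜.filter (fun A => delta i j A ∉ 𝒜)).image (delta i j)

/-- `𝒜* `: the members of `𝒜` intersecting every member of `𝒜`. -/
def starPart {α : Type*} [DecidableEq α] (𝒜 : Finset (Finset α)) :
    Finset (Finset α) :=
  𝒜.filter (fun A => ∀ B ∈ 𝒜, (A ∩ B).Nonempty)

lemma delta_of_pos {α : Type*} [DecidableEq α] {i j : α} {A : Finset α}
    (h : j ∈ A ∧ i ∉ A) : delta i j A = insert i (A.erase j) := if_pos h

lemma delta_of_neg {α : Type*} [DecidableEq α] {i j : α} {A : Finset α}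
    (h : ¬(j ∈ A ∧ i ∉ A)) : delta i j A = A := if_neg h

lemma delta_idem {α : Type*} [DecidableEq α] (i j : α) (A : Finset α) :
    delta i j (delta i j A) = delta i j A := by
  by_cases h : j ∈ A ∧ i ∉ A
  · rw [delta_of_pos h, delta_of_neg]
    simp
  · rw [delta_of_neg h, delta_of_neg h]

lemma key {α : Type*} [DecidableEq α] (i j : α) (𝒜 : Finset (Finset α))
    (A : Finset α) (hA : A ∈ 𝒜) (hs : ∀ B ∈ 𝒜, (A ∩ B).Nonempty)
    (C : Finset α) (hC : C ∈ compFam i j 𝒜) : (delta i j A ∩ C).Nonempty := by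
  rw [compFam, mem_union] at hC
  rcases hC with hC | hC
  · rw [mem_filter] at hC
    obtain ⟨hC, hdC⟩ := hC
    obtain ⟨x, hx⟩ := hs C hC
    rw [mem_inter] at hx
    by_cases hxj : x = j
    · subst hxj
      by_cases hiA : i ∈ A
      · refine ⟨x, ?_⟩
        rw [delta_of_neg (by tauto), mem_inter]; exact hx
      · by_cases hiC : i ∈ C
        · refine ⟨i, ?_⟩
          rw [delta_of_pos ⟨hx.1, hiA⟩, mem_inter]
          exact ⟨mem_insert_self _ _, hiC⟩
        · rw [delta_of_pos ⟨hx.2, hiC⟩] at hdC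
          obtain ⟨y, hy⟩ := hs _ hdC
          rw [mem_inter, mem_insert, mem_erase] at hy
          obtain ⟨hyA, hy2⟩ := hy
          rcases hy2 with rfl | ⟨hyj, hyC⟩
          · exact absurd hyA hiA
          · refine ⟨y, ?_⟩
            rw [delta_of_pos ⟨hx.1, hiA⟩, mem_inter, mem_insert, mem_erase]
            exact ⟨Or.inr ⟨hyj, hyA⟩, hyC⟩
    · refine ⟨x, ?_⟩
      by_cases hd : j ∈ A ∧ i ∉ A
      · rw [delta_of_pos hd, mem_inter, mem_insert, mem_erase]
        exact ⟨Or.inr ⟨hxj, hx.1⟩, hx.2⟩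
      · rw [delta_of_neg hd, mem_inter]; exact hx
  · rw [mem_image] at hC
    obtain ⟨B, hB, rfl⟩ := hC
    rw [mem_filter] at hB
    obtain ⟨hB, hdB⟩ := hB
    have hBd : j ∈ B ∧ i ∉ B := by
      by_contra h; rw [delta_of_neg h] at hdB; exact hdB hB
    rw [delta_of_pos hBd]
    by_cases hd : j ∈ A ∧ i ∉ A
    · refine ⟨i, ?_⟩
      rw [delta_of_pos hd, mem_inter]
      exact ⟨mem_insert_self _ _, mem_insert_self _ _⟩
    · rw [delta_of_neg hd]
      obtain ⟨x, hx⟩ := hs B hB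
      rw [mem_inter] at hx
      by_cases hxj : x = j
      · subst hxj
        have hiA : i ∈ A := by tauto
        exact ⟨i, mem_inter.2 ⟨hiA, mem_insert_self _ _⟩⟩
      · exact ⟨x, mem_inter.2 ⟨hx.1, mem_insert.2 (Or.inr (mem_erase.2 ⟨hxj, hx.2⟩))⟩⟩

theorem compression_star_mem (i j : Fin n) (hij : i ≠ j)
    (𝒜 : Finset (Finset (Fin n))) (A : Finset (Fin n))
    (hA : A ∈ starPart 𝒜) :
    delta i j A ∈ starPart (compFam i j 𝒜) := by
  simp only [starPart, mem_filter] at hA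
  obtain ⟨hA𝒜, hs⟩ := hA
  simp only [starPart, mem_filter]
  constructor
  · rw [compFam, mem_union]
    by_cases h : delta i j A ∈ 𝒜
    · left
      rw [mem_filter]
      exact ⟨h, by rw [delta_idem]; exact h⟩
    · right
      rw [mem_image]
      exact ⟨A, mem_filter.2 ⟨hA𝒜, h⟩, rfl⟩
  · exact key i j 𝒜 A hA𝒜 hs
end

section
/- Let A ⊆ 2^[n] and B = Δ_{i,j}(A) for distinct i, j ∈ [n]. If A ∈ A* \ B*, then δ_{i,j}(A) ∉ A*. -/
open Finset

variable {n : ℕ}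

theorem compression_star_not_mem (i j : Fin n) (hij : i ≠ j)
    (𝒜 : Finset (Finset (Fin n))) (A : Finset (Fin n))
    (hA : A ∈ starPart 𝒜) (hA' : A ∉ starPart (compFam i j 𝒜)) :
    delta i j A ∉ starPart 𝒜 := by
  simp only [starPart, mem_filter] at hA
  obtain ⟨hA𝒜, hAint⟩ := hA
  by_cases hAB : A ∈ compFam i j 𝒜
  · have hex : ∃ C ∈ compFam i j 𝒜, ¬(A ∩ C).Nonempty := by
      by_contra h
      push_neg at h
      refine hA' ?_; simp only [starPart, mem_filter]; exact ⟨hAB, h⟩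
    obtain ⟨C, hCB, hC⟩ := hex
    rw [compFam, mem_union, mem_filter, mem_image] at hCB
    rcases hCB with ⟨hC𝒜, -⟩ | ⟨D, hD, hDC⟩
    · exact absurd (hAint C hC𝒜) hC
    · rw [mem_filter] at hD
      obtain ⟨hD𝒜, hδD⟩ := hD
      have hcond : j ∈ D ∧ i ∉ D := by
        by_contra h
        rw [delta, if_neg h] at hδD
        exact hδD hD𝒜
      rw [delta, if_pos hcond] at hDC
      -- C = insert i (D.erase j)
      have hiA : i ∉ A := by
        intro hi
        exact hC ⟨i, mem_inter.2 ⟨hi, hDC ▸ mem_insert_self _ _⟩⟩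
      have hjA : j ∈ A := by
        obtain ⟨x, hx⟩ := hAint D hD𝒜
        rw [mem_inter] at hx
        by_cases hxj : x = j
        · exact hxj ▸ hx.1
        · exact absurd ⟨x, mem_inter.2 ⟨hx.1,
            hDC ▸ mem_insert.2 (Or.inr (mem_erase.2 ⟨hxj, hx.2⟩))⟩⟩ hC
      rw [delta, if_pos ⟨hjA, hiA⟩]; simp only [starPart, mem_filter]
      rintro ⟨-, hint⟩
      obtain ⟨y, hy⟩ := hint D hD𝒜
      rw [mem_inter, mem_insert] at hy
      rcases hy with ⟨hy1 | hy1, hy2⟩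
      · exact hcond.2 (hy1 ▸ hy2)
      · rw [mem_erase] at hy1
        exact hC ⟨y, mem_inter.2 ⟨hy1.2,
          hDC ▸ mem_insert.2 (Or.inr (mem_erase.2 ⟨hy1.1, hy2⟩))⟩⟩
  · have hδA : delta i j A ∉ 𝒜 := by
      intro h
      exact hAB (mem_union_left _ (mem_filter.2 ⟨hA𝒜, h⟩))
    simp only [starPart, mem_filter]
    rintro ⟨h, -⟩
    exact hδA h
end

section
/- Let H ⊆ 2^[n] be hereditary and compressed with respect to x ∈ [n], A ⊆ H with A' ≠ ∅. If |A*| + |A'|/(n+1) = |H⟨x⟩|, then A = H = {∅} ∪ {{i} : i ∈ [n]}. -/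
/-!
Compression turns the Marica–Schönheim inequality into Chvátal's bound `#𝒝 ≤ #H⟨x⟩` for every
intersecting `𝒝 ⊆ H`: for `A, C ∈ 𝒝` avoiding `x`, the set `insert x (A \ C)` lies in `H⟨x⟩` and
misses `C`. Some point `y` lies in at least `#(A' \ {∅}) / n` members of `A'`, and `A*` together with
these members is intersecting, so `#A* + #(A' \ {∅}) / n ≤ #H⟨x⟩`. If `∅ ∉ A` this makes the equality
impossible when `A' ≠ ∅`; so `∅ ∈ A`, hence `A* = ∅` and `#A = (n + 1) #H⟨x⟩ ≤ n #H⟨x⟩ + 1`, i.e.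
`H⟨x⟩ = {{x}}`. By compression every member of `H` then has at most one element, and counting
`#A = n + 1` gives `A = H = {∅} ∪ {{i}}`.
-/

open Finset FinsetFamily

variable {α : Type*} [DecidableEq α]

def IsCompressedAt (H : Finset (Finset α)) (x : α) : Prop :=
  ∀ F ∈ H, ∀ y ∈ F, x ∉ F → insert x (F.erase y) ∈ H

def intersectingCore (𝒜 : Finset (Finset α)) : Finset (Finset α) :=
  {A ∈ 𝒜 | ∀ B ∈ 𝒜, (A ∩ B).Nonempty}

theorem mem_intersectingCore {𝒜 : Finset (Finset α)} {A : Finset α} :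
    A ∈ intersectingCore 𝒜 ↔ A ∈ 𝒜 ∧ ∀ B ∈ 𝒜, (A ∩ B).Nonempty :=
  mem_filter

theorem intersectingCore_subset (𝒜 : Finset (Finset α)) : intersectingCore 𝒜 ⊆ 𝒜 :=
  filter_subset _ _

theorem intersectingCore_eq_empty_of_empty_mem {𝒜 : Finset (Finset α)} (hempty : ∅ ∈ 𝒜) :
    intersectingCore 𝒜 = ∅ :=
  filter_eq_empty_iff.2 fun _ _ h => by simpa using h ∅ hempty

theorem exists_card_erase_empty_le_card_mul_card_filter_mem [Fintype α] [Nonempty α]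
    (𝒜 : Finset (Finset α)) : ∃ y, #(𝒜.erase ∅) ≤ Fintype.card α * #{A ∈ 𝒜 | y ∈ A} := by
  obtain ⟨y, -, hy⟩ := exists_max_image univ (fun y => #{A ∈ 𝒜 | y ∈ A}) univ_nonempty
  refine ⟨y, ?_⟩
  calc #(𝒜.erase ∅) = ∑ A ∈ 𝒜.erase ∅, 1 := card_eq_sum_ones _
    _ ≤ ∑ A ∈ 𝒜.erase ∅, #A :=
      sum_le_sum fun A hA => one_le_card.2 (nonempty_iff_ne_empty.2 (ne_of_mem_erase hA))
    _ = ∑ A ∈ 𝒜, #A := sum_erase _ card_empty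
    _ ≤ Fintype.card α * #{A ∈ 𝒜 | y ∈ A} := sum_card_le fun z => hy z (mem_univ z)

theorem card_insert_empty_image_singleton [Fintype α] :
    #(insert ∅ (univ.image singleton) : Finset (Finset α)) = Fintype.card α + 1 := by
  rw [card_insert_of_notMem fun h => by simp at h, card_image_of_injective _ singleton_injective,
    card_univ]

theorem subset_insert_empty_image_singleton [Fintype α] {H : Finset (Finset α)}
    (hH : ∀ F ∈ H, #F ≤ 1) : H ⊆ insert ∅ (univ.image singleton) := by
  intro F hF
  rcases F.eq_empty_or_nonempty with rfl | ⟨i, hi⟩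
  · exact mem_insert_self _ _
  · refine mem_insert_of_mem (mem_image.2 ⟨i, mem_univ i, ?_⟩)
    exact (eq_singleton_iff_unique_mem.2 ⟨hi, fun j hj => card_le_one.1 (hH F hF) j hj i hi⟩).symm

namespace IsCompressedAt

variable {H : Finset (Finset α)} {x : α}

theorem insert_mem_of_ssubset (hH : IsLowerSet (H : Set (Finset α)))
    (hcomp : IsCompressedAt H x) {B E : Finset α} (hB : B ∈ H) (hxB : x ∉ B) (hEB : E ⊂ B) :
    insert x E ∈ H := by
  obtain ⟨y, hyB, hyE⟩ := exists_of_ssubset hEB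
  exact hH (insert_subset_insert x (subset_erase.2 ⟨hEB.subset, hyE⟩)) (hcomp B hB y hyB hxB)

theorem card_le_card_filter_mem_of_intersecting (hH : IsLowerSet (H : Set (Finset α)))
    (hcomp : IsCompressedAt H x) {𝒝 : Finset (Finset α)} (h𝒝H : 𝒝 ⊆ H)
    (h𝒝 : (𝒝 : Set (Finset α)).Intersecting) : #𝒝 ≤ #{A ∈ H | x ∈ A} := by
  set 𝒝₀ := {A ∈ 𝒝 | x ∉ A}
  set 𝒟 := (𝒝₀ \\ 𝒝₀).image (insert x)
  have hx_diffs : ∀ E ∈ 𝒝₀ \\ 𝒝₀, x ∉ E := by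
    simp only [𝒝₀, mem_diffs, mem_filter]
    rintro _ ⟨A, ⟨-, hxA⟩, C, -, rfl⟩ h
    exact hxA (mem_sdiff.1 h).1
  have h𝒟 : ∀ F ∈ 𝒟, (F ∈ H ∧ x ∈ F) ∧ F ∉ 𝒝 := by
    simp only [𝒟, 𝒝₀, mem_image, mem_diffs, mem_filter]
    rintro _ ⟨_, ⟨A, ⟨hA, hxA⟩, C, ⟨hC, hxC⟩, rfl⟩, rfl⟩
    obtain ⟨y, hy⟩ := not_disjoint_iff_nonempty_inter.1 (h𝒝 hA hC)
    have hssub : A \ C ⊂ A :=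
      ssubset_iff_of_subset sdiff_subset |>.2 ⟨y, (mem_inter.1 hy).1, fun h =>
        (mem_sdiff.1 h).2 (mem_inter.1 hy).2⟩
    refine ⟨⟨hcomp.insert_mem_of_ssubset hH (h𝒝H hA) hxA hssub, mem_insert_self _ _⟩,
      fun hF => h𝒝 hF hC ?_⟩
    simp [disjoint_insert_left, hxC, sdiff_disjoint]
  calc #𝒝 = #{A ∈ 𝒝 | x ∈ A} + #𝒝₀ := (card_filter_add_card_filter_not _).symm
    _ ≤ #{A ∈ 𝒝 | x ∈ A} + #𝒟 := by
      rw [card_image_of_injOn (insert_erase_invOn.2.injOn.mono hx_diffs)]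
      exact Nat.add_le_add_left (card_le_card_diffs 𝒝₀) _
    _ = #({A ∈ 𝒝 | x ∈ A} ∪ 𝒟) :=
      (card_union_of_disjoint (disjoint_right.2 fun F hF h => (h𝒟 F hF).2 (mem_filter.1 h).1)).symm
    _ ≤ #{A ∈ H | x ∈ A} := card_le_card <| union_subset
      (fun A hA => mem_filter.2 ⟨h𝒝H (mem_filter.1 hA).1, (mem_filter.1 hA).2⟩)
      (fun F hF => mem_filter.2 (h𝒟 F hF).1)

theorem exists_card_intersectingCore_add_le [Fintype α] [Nonempty α]
    (hH : IsLowerSet (H : Set (Finset α))) (hcomp : IsCompressedAt H x)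
    {𝒜 : Finset (Finset α)} (h𝒜 : 𝒜 ⊆ H) :
    ∃ d, #(intersectingCore 𝒜) + d ≤ #{A ∈ H | x ∈ A} ∧
      #((𝒜 \ intersectingCore 𝒜).erase ∅) ≤ Fintype.card α * d := by
  set 𝒦 := intersectingCore 𝒜
  obtain ⟨y, hy⟩ := exists_card_erase_empty_le_card_mul_card_filter_mem (𝒜 \ 𝒦)
  set 𝒴 := {A ∈ 𝒜 \ 𝒦 | y ∈ A}
  refine ⟨#𝒴, ?_, hy⟩
  have hsub : 𝒦 ∪ 𝒴 ⊆ H :=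
    union_subset ((intersectingCore_subset 𝒜).trans h𝒜)
      ((filter_subset _ _).trans (sdiff_subset.trans h𝒜))
  have hint : ((𝒦 ∪ 𝒴 : Finset (Finset α)) : Set (Finset α)).Intersecting := by
    intro A hA B hB
    rw [not_disjoint_iff_nonempty_inter]
    simp only [coe_union, Set.mem_union, mem_coe, 𝒴, mem_filter, mem_sdiff] at hA hB
    rcases hA with hA | ⟨⟨hA𝒜, -⟩, hyA⟩ <;> rcases hB with hB | ⟨⟨hB𝒜, -⟩, hyB⟩
    · exact (mem_intersectingCore.1 hA).2 B (intersectingCore_subset 𝒜 hB)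
    · exact (mem_intersectingCore.1 hA).2 B hB𝒜
    · exact inter_comm B A ▸ (mem_intersectingCore.1 hB).2 A hA𝒜
    · exact ⟨y, mem_inter.2 ⟨hyA, hyB⟩⟩
  rw [← card_union_of_disjoint (disjoint_sdiff.mono_right (filter_subset _ _))]
  exact hcomp.card_le_card_filter_mem_of_intersecting hH hsub hint

theorem empty_mem_of_card_mul_add_card_eq [Fintype α] [Nonempty α]
    (hH : IsLowerSet (H : Set (Finset α))) (hcomp : IsCompressedAt H x)
    {𝒜 : Finset (Finset α)} (h𝒜 : 𝒜 ⊆ H) (hne : (𝒜 \ intersectingCore 𝒜).Nonempty)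
    (heq : #(intersectingCore 𝒜) * (Fintype.card α + 1) + #(𝒜 \ intersectingCore 𝒜) =
      #{A ∈ H | x ∈ A} * (Fintype.card α + 1)) :
    ∅ ∈ 𝒜 := by
  by_contra hempty
  obtain ⟨d, hcore, hdeg⟩ := hcomp.exists_card_intersectingCore_add_le hH h𝒜
  rw [erase_eq_of_notMem fun h => hempty (mem_sdiff.1 h).1] at hdeg
  have hd : d = 0 := by nlinarith [Nat.mul_le_mul_right (Fintype.card α + 1) hcore]
  rw [hd, mul_zero, Nat.le_zero, card_eq_zero] at hdeg
  exact hne.ne_empty hdeg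

theorem card_filter_mem_eq_one [Fintype α] [Nonempty α]
    (hH : IsLowerSet (H : Set (Finset α))) (hcomp : IsCompressedAt H x)
    {𝒜 : Finset (Finset α)} (h𝒜 : 𝒜 ⊆ H) (hempty : ∅ ∈ 𝒜)
    (heq : #𝒜 = #{A ∈ H | x ∈ A} * (Fintype.card α + 1)) :
    #{A ∈ H | x ∈ A} = 1 := by
  obtain ⟨d, hd, hdeg⟩ := hcomp.exists_card_intersectingCore_add_le hH h𝒜
  rw [intersectingCore_eq_empty_of_empty_mem hempty, card_empty, zero_add] at hd
  rw [intersectingCore_eq_empty_of_empty_mem hempty, sdiff_empty] at hdeg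
  have := card_erase_add_one hempty
  have := card_pos.2 ⟨_, hempty⟩
  nlinarith

theorem card_le_one_of_card_filter_mem_le_one (hH : IsLowerSet (H : Set (Finset α)))
    (hcomp : IsCompressedAt H x) (hS : #{A ∈ H | x ∈ A} ≤ 1) {F : Finset α} (hF : F ∈ H) :
    #F ≤ 1 := by
  rcases F.eq_empty_or_nonempty with rfl | ⟨y, hy⟩
  · simp
  obtain ⟨G, hGS, hFG⟩ : ∃ G ∈ {A ∈ H | x ∈ A}, #F ≤ #G := by
    by_cases hxF : x ∈ F
    · exact ⟨F, mem_filter.2 ⟨hF, hxF⟩, le_rfl⟩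
    refine ⟨_, mem_filter.2 ⟨hcomp F hF y hy hxF, mem_insert_self _ _⟩, ?_⟩
    rw [card_insert_of_notMem fun h => hxF (mem_of_mem_erase h), card_erase_add_one hy]
  rw [mem_filter] at hGS
  have hxS : {x} ∈ {A ∈ H | x ∈ A} :=
    mem_filter.2 ⟨hH (singleton_subset_iff.2 hGS.2) hGS.1, mem_singleton_self x⟩
  rw [← card_le_one.1 hS _ hxS _ (mem_filter.2 hGS)] at hFG
  simpa using hFG

end IsCompressedAt

theorem main_inequality_equality_case {n : ℕ}
    (H : Finset (Finset (Fin n))) (x : Fin n)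
    (hH : ∀ A ∈ H, ∀ B ⊆ A, B ∈ H)
    (hcomp : ∀ F ∈ H, ∀ y ∈ F, x ∉ F → insert x (F.erase y) ∈ H)
    (𝒜 : Finset (Finset (Fin n))) (h𝒜 : 𝒜 ⊆ H)
    (hne : (𝒜 \ 𝒜.filter (fun A => ∀ B ∈ 𝒜, (A ∩ B).Nonempty)).Nonempty)
    (heq : ((𝒜.filter (fun A => ∀ B ∈ 𝒜, (A ∩ B).Nonempty)).card : ℝ) +
        ((𝒜 \ 𝒜.filter (fun A => ∀ B ∈ 𝒜, (A ∩ B).Nonempty)).card : ℝ) / (n + 1)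
      = ((H.filter (fun A => x ∈ A)).card : ℝ)) :
    𝒜 = H ∧
      H = insert (∅ : Finset (Fin n))
        (Finset.univ.image (fun i : Fin n => ({i} : Finset (Fin n)))) := by
  have : Nonempty (Fin n) := ⟨x⟩
  have hH' : IsLowerSet (H : Set (Finset (Fin n))) := fun A B hBA hA => hH A hA B hBA
  have hcomp' : IsCompressedAt H x := hcomp
  -- not `rfl`: here the filter is decided through `Fintype (Finset (Fin n))`
  have hcore : {A ∈ 𝒜 | ∀ B ∈ 𝒜, (A ∩ B).Nonempty} = intersectingCore 𝒜 := by
    ext; rw [mem_filter, mem_intersectingCore]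
  rw [hcore] at hne heq
  have hnat : #(intersectingCore 𝒜) * (Fintype.card (Fin n) + 1) + #(𝒜 \ intersectingCore 𝒜) =
      #{A ∈ H | x ∈ A} * (Fintype.card (Fin n) + 1) := by
    rw [Fintype.card_fin]
    field_simp at heq
    exact_mod_cast heq.trans (mul_comm _ _)
  have hempty := hcomp'.empty_mem_of_card_mul_add_card_eq hH' h𝒜 hne hnat
  rw [intersectingCore_eq_empty_of_empty_mem hempty, card_empty, zero_mul, zero_add,
    sdiff_empty] at hnat
  have hS := hcomp'.card_filter_mem_eq_one hH' h𝒜 hempty hnat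
  have hHT := subset_insert_empty_image_singleton fun F hF =>
    hcomp'.card_le_one_of_card_filter_mem_le_one hH' hS.le hF
  have h𝒜T := eq_of_subset_of_card_le (h𝒜.trans hHT)
    (by rw [card_insert_empty_image_singleton, hnat, hS, one_mul])
  have hHT' := hHT.antisymm (h𝒜T ▸ h𝒜)
  exact ⟨h𝒜T.trans hHT'.symm, hHT'⟩
end

section
/- If H ⊆ 2^[n] is hereditary with nonempty union and H ≠ {∅} ∪ {{i} : i ∈ [n]}, and S is a largest star of H, then |H| < (n+1)|S|. -/
/-!
Count pairs `(i, A)` with `i ∈ A ∈ H`: every nonempty member of `H` contributes at least one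
pair, and each of the `n` stars contributes at most `s = |S|` pairs, so `|H| ≤ 1 + n s`, which is
`< (n + 1) s` as soon as `s ≥ 2`. If `s = 1`, then no member of `H` has two elements `i ≠ j`,
since `A` and `{i}` would lie in the star of `i`; so `H` is a proper subfamily of
`{∅} ∪ {{i} : i ∈ [n]}`, which has `n + 1` members.
-/

open Finset

variable {α : Type*} [DecidableEq α]

def starAt (H : Finset (Finset α)) (i : α) : Finset (Finset α) := H.filter (i ∈ ·)

variable (α) in
def emptyAndSingletons [Fintype α] : Finset (Finset α) :=
  insert ∅ (univ.image fun i => {i})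

theorem sum_card_starAt [Fintype α] (H : Finset (Finset α)) :
    ∑ i, #(starAt H i) = ∑ A ∈ H, #A := by
  simpa [bipartiteAbove, bipartiteBelow, starAt] using
    sum_card_bipartiteAbove_eq_sum_card_bipartiteBelow (s := univ) (t := H) (· ∈ ·)

theorem card_le_one_add_sum_card (H : Finset (Finset α)) : #H ≤ 1 + ∑ A ∈ H, #A := by
  have hpos : ∀ A ∈ H.erase ∅, 1 ≤ #A := fun A hA =>
    card_pos.mpr (nonempty_iff_ne_empty.mpr (ne_of_mem_erase hA))
  calc #H ≤ 1 + #(H.erase ∅) := by have := pred_card_le_card_erase (s := H) (a := ∅); omega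
    _ ≤ 1 + ∑ A ∈ H.erase ∅, #A := by
        gcongr; simpa using card_nsmul_le_sum _ _ 1 hpos
    _ ≤ 1 + ∑ A ∈ H, #A := by gcongr; exact erase_subset _ _

theorem card_le_one_add_card_mul [Fintype α] (H : Finset (Finset α)) {s : ℕ}
    (hs : ∀ i, #(starAt H i) ≤ s) : #H ≤ 1 + Fintype.card α * s :=
  calc #H ≤ 1 + ∑ A ∈ H, #A := card_le_one_add_sum_card H
    _ = 1 + ∑ i, #(starAt H i) := by rw [sum_card_starAt]
    _ ≤ 1 + ∑ _i : α, s := by gcongr with i; exact hs i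
    _ = 1 + Fintype.card α * s := by simp

theorem card_le_one_of_card_starAt_le_one {H : Finset (Finset α)}
    (hH : IsLowerSet (H : Set (Finset α))) (hs : ∀ i, #(starAt H i) ≤ 1) {A : Finset α}
    (hA : A ∈ H) : #A ≤ 1 := by
  refine card_le_one.mpr fun i hi j hj => ?_
  by_contra hij
  have hiH : {i} ∈ H := hH (singleton_subset_iff.mpr hi) hA
  have hA_eq : A = {i} := card_le_one.mp (hs i) A (mem_filter.mpr ⟨hA, hi⟩) {i}
    (mem_filter.mpr ⟨hiH, mem_singleton_self i⟩)
  exact hij (mem_singleton.mp (hA_eq ▸ hj)).symm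

theorem subset_emptyAndSingletons [Fintype α] {H : Finset (Finset α)}
    (hH : ∀ A ∈ H, #A ≤ 1) : H ⊆ emptyAndSingletons α := by
  intro A hA
  rcases A.eq_empty_or_nonempty with rfl | hA_ne
  · exact mem_insert_self _ _
  · obtain ⟨i, rfl⟩ := card_eq_one.mp (le_antisymm (hH A hA) hA_ne.card_pos)
    exact mem_insert_of_mem (mem_image_of_mem _ (mem_univ i))

theorem card_emptyAndSingletons [Fintype α] :
    #(emptyAndSingletons α) = Fintype.card α + 1 := by
  rw [emptyAndSingletons, card_insert_of_notMem (by simp),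
    card_image_of_injective _ singleton_injective, card_univ]

theorem card_lt_of_ne_singletons_general {n : ℕ}
    (H : Finset (Finset (Fin n))) (x : Fin n)
    (hH : ∀ A ∈ H, ∀ B ⊆ A, B ∈ H)
    (hne : H ≠ insert (∅ : Finset (Fin n))
        (Finset.univ.image (fun i : Fin n => ({i} : Finset (Fin n)))))
    (hx : ∃ F ∈ H, x ∈ F)
    (hlargest : ∀ i : Fin n,
      (H.filter (fun A => i ∈ A)).card ≤ (H.filter (fun A => x ∈ A)).card) :
    H.card < (n + 1) * (H.filter (fun A => x ∈ A)).card := by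
  change ∀ i, #(starAt H i) ≤ #(starAt H x) at hlargest
  change #H < (n + 1) * #(starAt H x)
  obtain ⟨F, hF, hxF⟩ := hx
  have hpos : 0 < #(starAt H x) := card_pos.mpr ⟨F, mem_filter.mpr ⟨hF, hxF⟩⟩
  obtain hone | htwo := (by omega : #(starAt H x) = 1 ∨ 2 ≤ #(starAt H x))
  · have hlower : IsLowerSet (H : Set (Finset (Fin n))) := fun A B hBA hA => hH A hA B hBA
    have hsub : H ⊂ emptyAndSingletons (Fin n) :=
      Finset.ssubset_iff_subset_ne.mpr ⟨subset_emptyAndSingletons fun A hA =>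
        card_le_one_of_card_starAt_le_one hlower (hone ▸ hlargest) hA, hne⟩
    simpa [hone, card_emptyAndSingletons] using card_lt_card hsub
  · calc #H ≤ 1 + n * #(starAt H x) := by simpa using card_le_one_add_card_mul H hlargest
      _ < (n + 1) * #(starAt H x) := by rw [add_one_mul]; omega

theorem card_lt_of_ne_singletons {n : ℕ}
    (H : Finset (Finset (Fin n))) (x : Fin n)
    (hH : ∀ A ∈ H, ∀ B ⊆ A, B ∈ H)
    (hU : ∃ F ∈ H, F.Nonempty)
    (hne : H ≠ insert (∅ : Finset (Fin n))
        (Finset.univ.image (fun i : Fin n => ({i} : Finset (Fin n)))))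
    (hx : ∃ F ∈ H, x ∈ F)
    (hlargest : ∀ i : Fin n,
      (H.filter (fun A => i ∈ A)).card ≤ (H.filter (fun A => x ∈ A)).card) :
    H.card < (n + 1) * (H.filter (fun A => x ∈ A)).card :=
  card_lt_of_ne_singletons_general H x hH hne hx hlargest
end
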